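/- Let S = {(−4,0), (−3,−1), (12,8), (13,5), (13,7)} with unit weights, and define Φ(f,t) = Σ_{p∈S} min{‖p−f‖₁, ‖p−t‖₁ + 1}. For ε ∈ [12 − √155, 12 − √131], let t_ε = (ε, 0) and f_ε = (12, √(36 + 24ε − ε²)). Then for every such ε with ε ≠ 0, Φ(f_ε, t_ε) > Φ(f₀, t₀), where f₀ = (12,6) and t₀ = (0,0); that is, the highway with endpoints f₀ = (12,6) and t₀ = (0,0) is strictly better than every nearby highway in this one-parameter family. -/

import Mathlib

/-!
On the family, `f_ε` has second coordinate `y = √(180 - (12 - ε)²) ∈ [5, 7]` and `|ε| ≤ 1`. In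
that range every summand of `Φ` is attained by the same branch of the `min` (the two lower-left
points use the highway, the three right points walk to the facility), so `Φ(f_ε, t_ε)` equals
the affine expression `22 + 2ε - y`, which is `16` at `ε = 0`. Strict optimality then reduces to
`√(36 + 24ε - ε²) < 6 + 2ε`, i.e. to `0 < 5ε²`.
-/

/-- The L1 (Manhattan) norm of a point of the plane. -/
def l1 (u : ℝ × ℝ) : ℝ := |u.1| + |u.2|

/-- The five demand points of the counterexample instance. -/
noncomputable def Spts : Finset (ℝ × ℝ) :=
  {((-4 : ℝ), (0 : ℝ)), ((-3 : ℝ), (-1 : ℝ)), ((12 : ℝ), (8 : ℝ)),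
   ((13 : ℝ), (5 : ℝ)), ((13 : ℝ), (7 : ℝ))}

/-- Total transportation cost (unit weights, traversal time 1). -/
noncomputable def Phi (f t : ℝ × ℝ) : ℝ :=
  ∑ p ∈ Spts, min (l1 (p - f)) (l1 (p - t) + 1)

open Real

theorem Phi_eq_of_mem_Icc {ε y : ℝ} (hε : ε ∈ Set.Icc (-3) 11) (hy : y ∈ Set.Icc 5 7) :
    Phi (12, y) (ε, 0) = 22 + 2 * ε - y := by
  obtain ⟨hε₁, hε₂⟩ := hε
  obtain ⟨hy₁, hy₂⟩ := hy
  norm_num [Phi, Spts, l1, Finset.sum_insert, Prod.ext_iff, Prod.mk_sub_mk]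
  rw [abs_of_nonneg (by linarith : 0 ≤ y), abs_of_nonpos (by linarith : -4 - ε ≤ 0),
    abs_of_nonpos (by linarith : -1 - y ≤ 0), abs_of_nonpos (by linarith : -3 - ε ≤ 0),
    abs_of_nonneg (by linarith : 0 ≤ 8 - y), abs_of_nonneg (by linarith : 0 ≤ 12 - ε),
    abs_of_nonpos (by linarith : 5 - y ≤ 0), abs_of_nonneg (by linarith : 0 ≤ 13 - ε),
    abs_of_nonneg (by linarith : 0 ≤ 7 - y),
    min_eq_right (by linarith : -(-4 - ε) + 1 ≤ 16 + y),
    min_eq_right (by linarith : -(-3 - ε) + 1 + 1 ≤ 15 + -(-1 - y)),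
    min_eq_left (by linarith : 8 - y ≤ 12 - ε + 8 + 1),
    min_eq_left (by linarith : 1 + -(5 - y) ≤ 13 - ε + 5 + 1),
    min_eq_left (by linarith : 1 + (7 - y) ≤ 13 - ε + 7 + 1)]
  ring

theorem mem_Icc_of_sqrt_sub_le {ε : ℝ} (h1 : 12 - √155 ≤ ε) (h2 : ε ≤ 12 - √131) :
    ε ∈ Set.Icc (-1) 1 ∧ √(36 + 24 * ε - ε ^ 2) ∈ Set.Icc 5 7 := by
  have h155 : √155 ≤ 13 := (sqrt_le_left (by norm_num)).2 (by norm_num)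
  have h131 : 11 ≤ √131 := (le_sqrt (by norm_num) (by norm_num)).2 (by norm_num)
  have hsq_le : (12 - ε) ^ 2 ≤ 155 := (le_sqrt (by linarith) (by norm_num)).1 (by linarith)
  have hsq_ge : 131 ≤ (12 - ε) ^ 2 := (sqrt_le_left (by linarith)).1 (by linarith)
  -- `36 + 24ε - ε² = 180 - (12 - ε)²`: the highway has squared length 180.
  refine ⟨⟨by linarith, by linarith⟩, ?_, ?_⟩
  · exact (le_sqrt (by norm_num) (by nlinarith)).2 (by nlinarith)
  · exact (sqrt_le_left (by norm_num)).2 (by nlinarith)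

theorem sqrt_lt_six_add_two_mul {ε : ℝ} (hε : -3 < ε) (h0 : ε ≠ 0) :
    √(36 + 24 * ε - ε ^ 2) < 6 + 2 * ε := by
  rw [sqrt_lt' (by linarith)]
  nlinarith [pow_pos (abs_pos.2 h0) 2, sq_abs ε]

/-- The highway with endpoints `f₀ = (12,6)` and `t₀ = (0,0)` is strictly better than
every other nearby highway in the one-parameter family `t_ε = (ε, 0)`,
`f_ε = (12, √(36 + 24ε - ε²))`. -/
theorem family_strict_optimality (ε : ℝ)
    (h1 : 12 - Real.sqrt 155 ≤ ε) (h2 : ε ≤ 12 - Real.sqrt 131) (h0 : ε ≠ 0) :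
    Phi ((12 : ℝ), (6 : ℝ)) ((0 : ℝ), (0 : ℝ)) <
      Phi ((12 : ℝ), Real.sqrt (36 + 24 * ε - ε ^ 2)) ((ε : ℝ), (0 : ℝ)) := by
  obtain ⟨⟨hε₁, hε₂⟩, hy⟩ := mem_Icc_of_sqrt_sub_le h1 h2
  rw [Phi_eq_of_mem_Icc (by norm_num) (by norm_num),
    Phi_eq_of_mem_Icc ⟨by linarith, by linarith⟩ hy]
  linarith [sqrt_lt_six_add_two_mul (by linarith) h0]
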